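/- arXiv:1912.00212 — 5 statements merged into one kernel-verified Lean document; each statement's English description precedes it below -/
import Mathlib

section
/- Let V be a finite \F_r-linear subspace of an algebraic closure of \F_r of dimension n over \F_r. Then the polynomial f_V = \prod_{\alpha \in V}(x - \alpha) is a monic squarefree r-additive polynomial of degree r^n. -/
/-!
Induct on a spanning set of `V`, with `q = |F|`. If `f_W` is `q`-linearized for a subspace `W`
and `β ∉ W`, then `W ⊔ F β` is the disjoint union of the translates `W + c β`, `c ∈ F`, so
`f_{W ⊔ F β}(X) = ∏_c f_W(X - c β) = ∏_c (f_W(X) - c f_W(β)) = f_W^q - f_W(β)^(q-1) f_W`,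
because `f_W` is additive and `F`-linear and `∏_{c ∈ F} (Y - c) = Y^q - Y`. The right-hand side
is again `q`-linearized, with leading coefficient `1^q = 1`.
-/

open Polynomial Finset

section Frobenius

variable (F A : Type*) [Field F] [Fintype F] [CommRing A] [Nontrivial A] [Algebra F A]

def iterateFrobeniusCard (i : ℕ) : A →+* A where
  toFun x := x ^ Fintype.card F ^ i
  map_one' := one_pow _
  map_mul' x y := mul_pow x y _
  map_zero' := zero_pow (pow_ne_zero _ Fintype.card_ne_zero)
  map_add' x y := by
    obtain ⟨p, _, k, hp, hq⟩ := FiniteField.card' F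
    have : Fact p.Prime := ⟨hp⟩
    have : CharP A p := charP_of_injective_algebraMap' F p
    simp only [hq, ← pow_mul]
    exact add_pow_char_pow ..

@[simp]
theorem iterateFrobeniusCard_apply (i : ℕ) (x : A) :
    iterateFrobeniusCard F A i x = x ^ Fintype.card F ^ i := rfl

end Frobenius

section ProdSub

variable (F : Type*) {A : Type*} [Field F] [Fintype F] [CommRing A] [Algebra F A]

theorem prod_X_sub_C_eq_X_pow_card_sub_X :
    ∏ c : F, (X - C c) = X ^ Fintype.card F - X := by
  have hq : 1 < Fintype.card F := Fintype.one_lt_card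
  have hmonic : (X ^ Fintype.card F - X : F[X]).Monic := monic_X_pow_sub (by simpa using hq)
  rw [← prod_multiset_X_sub_C_of_monic_of_roots_card_eq hmonic (by
    rw [FiniteField.roots_X_pow_card_sub_X, FiniteField.X_pow_card_sub_X_natDegree_eq F hq]; rfl),
    FiniteField.roots_X_pow_card_sub_X]
  rfl

theorem prod_sub_smul_of_isUnit (y : A) {u : A} (hu : IsUnit u) :
    ∏ c : F, (y - c • u) = y ^ Fintype.card F - u ^ (Fintype.card F - 1) * y := by
  obtain ⟨u, rfl⟩ := hu
  set q := Fintype.card F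
  set z := (↑u⁻¹ : A) * y
  have hy : y = u * z := by simp [z]
  clear_value z
  have hz : ∏ c : F, (z - algebraMap F A c) = z ^ q - z := by
    simpa using congrArg (aeval z) (prod_X_sub_C_eq_X_pow_card_sub_X F)
  obtain ⟨m, hm⟩ : ∃ m, q = m + 1 := ⟨q - 1, (Nat.sub_add_cancel Fintype.card_pos).symm⟩
  calc ∏ c : F, (y - c • (u : A)) = ∏ c : F, ((u : A) * (z - algebraMap F A c)) := by
        refine prod_congr rfl fun c _ => ?_
        rw [hy, Algebra.smul_def]
        ring
    _ = (u : A) ^ q * (z ^ q - z) := by rw [prod_mul_distrib, prod_const, card_univ, hz]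
    _ = y ^ q - (u : A) ^ (q - 1) * y := by
        rw [hy, hm, Nat.add_sub_cancel]
        ring

end ProdSub

noncomputable def linearizedPoly {R : Type*} [Semiring R] (q : ℕ) (a : ℕ → R) (m : ℕ) : R[X] :=
  ∑ i ∈ range m, C (a i) * X ^ q ^ i

section Linearized

variable {F A : Type*} [Field F] [Fintype F] [CommRing A] [Algebra F A]

theorem linearizedPoly_comp_X_sub_C [Nontrivial A] (a : ℕ → A) (m : ℕ) (w : A) :
    (linearizedPoly (Fintype.card F) a m).comp (X - C w) =
      linearizedPoly (Fintype.card F) a m - C ((linearizedPoly (Fintype.card F) a m).eval w) := by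
  simp only [linearizedPoly, Polynomial.sum_comp, mul_comp, C_comp, pow_comp, X_comp,
    eval_finsetSum, eval_mul, eval_C, eval_pow, eval_X, map_sum, ← sum_sub_distrib]
  refine sum_congr rfl fun i _ => ?_
  rw [← iterateFrobeniusCard_apply F, map_sub, iterateFrobeniusCard_apply,
    iterateFrobeniusCard_apply, ← C_pow, mul_sub, C_mul]

theorem linearizedPoly_eval_smul (a : ℕ → A) (m : ℕ) (c : F) (w : A) :
    (linearizedPoly (Fintype.card F) a m).eval (c • w) =
      c • (linearizedPoly (Fintype.card F) a m).eval w := by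
  simp only [linearizedPoly, eval_finsetSum, eval_mul, eval_C, eval_pow, eval_X, smul_sum,
    _root_.smul_pow, FiniteField.pow_card_pow, mul_smul_comm]

theorem exists_linearizedPoly_eq_pow_card_sub_C_mul [Nontrivial A] (a : ℕ → A) (n : ℕ) (b : A) :
    ∃ a' : ℕ → A, a' (n + 1) = a n ^ Fintype.card F ∧
      linearizedPoly (Fintype.card F) a (n + 1) ^ Fintype.card F -
        C b * linearizedPoly (Fintype.card F) a (n + 1) =
        linearizedPoly (Fintype.card F) a' (n + 2) := by
  set q := Fintype.card F
  refine ⟨fun j => (if j = 0 then 0 else a (j - 1) ^ q) - if j ≤ n then b * a j else 0,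
    by simp, ?_⟩
  have hpow : linearizedPoly q a (n + 1) ^ q =
      ∑ i ∈ range (n + 1), C (a i ^ q) * X ^ q ^ (i + 1) := by
    have hfrob (x : A[X]) : x ^ q = iterateFrobeniusCard F A[X] 1 x := by
      rw [iterateFrobeniusCard_apply, pow_one]
    rw [hfrob, linearizedPoly, map_sum]
    refine sum_congr rfl fun i _ => ?_
    rw [← hfrob, mul_pow, ← C_pow, ← pow_mul, ← pow_succ]
  have hmul : C b * linearizedPoly q a (n + 1) =
      ∑ i ∈ range (n + 2), C (if i ≤ n then b * a i else 0) * X ^ q ^ i := by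
    rw [sum_range_succ, if_neg (by omega), C_0, zero_mul, add_zero, linearizedPoly, mul_sum]
    refine sum_congr rfl fun i hi => ?_
    rw [if_pos (Nat.lt_succ_iff.mp (mem_range.mp hi)), C_mul, mul_assoc]
  rw [hpow, hmul, linearizedPoly]
  simp only [map_sub, sub_mul, sum_sub_distrib]
  congr 1
  rw [sum_range_succ' _ (n + 1)]
  simp

end Linearized

section Translates

variable {F M : Type*} [Field F] [AddCommGroup M] [Module F M]

theorem Submodule.injOn_add_smul {W : Submodule F M} {β : M} (hβ : β ∉ W) :
    Set.InjOn (fun x : F × M => x.2 + x.1 • β) (Set.univ ×ˢ (W : Set M)) := by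
  rintro ⟨c₁, v₁⟩ ⟨-, hv₁⟩ ⟨c₂, v₂⟩ ⟨-, hv₂⟩ h
  obtain rfl : c₁ = c₂ := by
    by_contra hne
    have hmem : (c₁ - c₂) • β ∈ W := by
      have : (c₁ - c₂) • β = v₂ - v₁ := by
        rw [sub_smul]
        linear_combination (norm := module) h
      exact this ▸ W.sub_mem hv₂ hv₁
    exact hβ ((W.smul_mem_iff (sub_ne_zero.mpr hne)).mp hmem)
  simpa using h

theorem Submodule.image_add_smul (W : Submodule F M) (β : M) :
    (fun x : F × M => x.2 + x.1 • β) '' (Set.univ ×ˢ (W : Set M)) = ↑(W ⊔ F ∙ β) := by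
  ext x
  simp only [Set.mem_image, Set.mem_prod, Set.mem_univ, true_and, SetLike.mem_coe,
    Submodule.mem_sup, Submodule.mem_span_singleton, Prod.exists]
  constructor
  · rintro ⟨c, v, hv, rfl⟩
    exact ⟨v, hv, c • β, ⟨c, rfl⟩, rfl⟩
  · rintro ⟨v, hv, _, ⟨c, rfl⟩, rfl⟩
    exact ⟨c, v, hv, rfl⟩

theorem Finset.eq_image_add_smul [Fintype F] [DecidableEq M] {W : Submodule F M} {β : M}
    {T T' : Finset M} (hT : (T : Set M) = W) (hT' : (T' : Set M) = ↑(W ⊔ F ∙ β)) :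
    T' = (univ ×ˢ T).image (fun x : F × M => x.2 + x.1 • β) :=
  coe_injective <| by rw [coe_image, coe_product, coe_univ, hT, Submodule.image_add_smul, hT']

theorem Finset.injOn_add_smul [Fintype F] {W : Submodule F M} {β : M} (hβ : β ∉ W)
    {T : Finset M} (hT : (T : Set M) = W) :
    Set.InjOn (fun x : F × M => x.2 + x.1 • β) ↑(univ ×ˢ T : Finset (F × M)) := by
  rw [coe_product, coe_univ, hT]
  exact Submodule.injOn_add_smul hβ

theorem Finset.card_eq_card_mul_of_coe_eq_sup [Fintype F] {W : Submodule F M} {β : M}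
    (hβ : β ∉ W) {T T' : Finset M} (hT : (T : Set M) = W) (hT' : (T' : Set M) = ↑(W ⊔ F ∙ β)) :
    #T' = Fintype.card F * #T := by
  classical
  rw [eq_image_add_smul hT hT', card_image_of_injOn (injOn_add_smul hβ hT), card_product,
    card_univ]

theorem Finset.card_eq_pow_finrank_of_coe_eq [Fintype F] {W : Submodule F M} {T : Finset M}
    (hT : (T : Set M) = W) : #T = Fintype.card F ^ Module.finrank F W := by
  have : Finite W := (hT ▸ T.finite_toSet : (W : Set M).Finite)
  rw [← Nat.card_eq_fintype_card, ← Module.natCard_eq_pow_finrank, ← SetLike.coe_sort_coe, ← hT,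
    Nat.card_coe_set_eq, Set.ncard_coe_finset]

end Translates

section SubspacePolynomial

variable {F K : Type*} [Field F] [Fintype F] [Field K] [Algebra F K]

theorem exists_prod_X_sub_C_eq_linearizedPoly_of_coe_eq_sup {W : Submodule F K} {β : K}
    (hβ : β ∉ W) {T T' : Finset K} (hT : (T : Set K) = W) (hT' : (T' : Set K) = ↑(W ⊔ F ∙ β))
    {n : ℕ} {a : ℕ → K} (ha : ∏ α ∈ T, (X - C α) = linearizedPoly (Fintype.card F) a (n + 1)) :
    ∃ a' : ℕ → K, a' (n + 1) = a n ^ Fintype.card F ∧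
      ∏ α ∈ T', (X - C α) = linearizedPoly (Fintype.card F) a' (n + 2) := by
  classical
  set G := linearizedPoly (Fintype.card F) a (n + 1)
  have hb : G.eval β ≠ 0 := by
    rw [← ha, eval_prod, prod_ne_zero_iff]
    intro α hα
    rw [eval_sub, eval_X, eval_C, sub_ne_zero]
    rintro rfl
    exact hβ (by rw [← SetLike.mem_coe, ← hT]; exact hα)
  set b := G.eval β
  obtain ⟨a', ha'n, ha'⟩ :=
    exists_linearizedPoly_eq_pow_card_sub_C_mul (F := F) a n (b ^ (Fintype.card F - 1))
  refine ⟨a', ha'n, ?_⟩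
  rw [eq_image_add_smul hT hT', prod_image (injOn_add_smul hβ hT), prod_product, ← ha']
  calc ∏ c : F, ∏ v ∈ T, (X - C (v + c • β)) = ∏ c : F, G.comp (X - C (c • β)) := by
        refine prod_congr rfl fun c _ => ?_
        rw [← ha, Polynomial.prod_comp]
        refine prod_congr rfl fun v _ => ?_
        rw [sub_comp, X_comp, C_comp, C_add]
        ring
    _ = ∏ c : F, (G - c • C b) := by
        simp only [G, linearizedPoly_comp_X_sub_C, linearizedPoly_eval_smul, smul_C, b]
    _ = G ^ Fintype.card F - C (b ^ (Fintype.card F - 1)) * G := by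
        rw [prod_sub_smul_of_isUnit F G (isUnit_C.mpr hb.isUnit), C_pow]

theorem exists_prod_X_sub_C_eq_linearizedPoly_of_coe_eq_span (s T : Finset K)
    (hT : (T : Set K) = Submodule.span F (s : Set K)) :
    ∃ n a, #T = Fintype.card F ^ n ∧ a n = 1 ∧
      ∏ α ∈ T, (X - C α) = linearizedPoly (Fintype.card F) a (n + 1) := by
  classical
  induction s using Finset.induction_on generalizing T with
  | empty =>
    obtain rfl : T = {0} := coe_injective (by simpa using hT)
    exact ⟨0, fun _ => 1, rfl, rfl, by simp [linearizedPoly]⟩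
  | insert β s _ ih =>
    set W := Submodule.span F (s : Set K)
    have hWfin : (W : Set K).Finite :=
      T.finite_toSet.subset (hT ▸ Submodule.span_mono (by simp))
    obtain ⟨n, a, hcard, ha1, ha⟩ := ih hWfin.toFinset hWfin.coe_toFinset
    by_cases hβ : β ∈ W
    · obtain rfl : T = hWfin.toFinset := coe_injective <| by
        rw [hT, coe_insert, Submodule.span_insert_eq_span hβ, hWfin.coe_toFinset]
      exact ⟨n, a, hcard, ha1, ha⟩
    · have hT' : (T : Set K) = ↑(W ⊔ F ∙ β) := by
        rw [hT, coe_insert, Submodule.span_insert, sup_comm]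
      obtain ⟨a', ha'1, ha'⟩ :=
        exists_prod_X_sub_C_eq_linearizedPoly_of_coe_eq_sup hβ hWfin.coe_toFinset hT' ha
      refine ⟨n + 1, a', ?_, by rw [ha'1, ha1, one_pow], ha'⟩
      rw [card_eq_card_mul_of_coe_eq_sup hβ hWfin.coe_toFinset hT', hcard, pow_succ']

end SubspacePolynomial

theorem subspace_polynomial_is_additive_general
    (r : ℕ)
    (F : Type*) [Field F] [Fintype F] (hF : Fintype.card F = r)
    (n : ℕ) (V : Submodule F (AlgebraicClosure F)) (hV : Module.finrank F V = n)
    (S : Finset (AlgebraicClosure F)) (hS : ↑S = (V : Set (AlgebraicClosure F))) :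
    (∏ α ∈ S, (X - C α)).Monic ∧ Squarefree (∏ α ∈ S, (X - C α)) ∧
      (∏ α ∈ S, (X - C α)).natDegree = r ^ n ∧
      ∃ a : ℕ → AlgebraicClosure F, a n = 1 ∧
        ∏ α ∈ S, (X - C α) = ∑ i ∈ Finset.range (n + 1), C (a i) * X ^ r ^ i := by
  subst hF hV
  obtain ⟨k, a, hcard, ha1, ha⟩ :=
    exists_prod_X_sub_C_eq_linearizedPoly_of_coe_eq_span S S (by rw [hS, Submodule.span_eq])
  obtain rfl : k = Module.finrank F V :=
    Nat.pow_right_injective Fintype.one_lt_card <|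
      hcard.symm.trans (card_eq_pow_finrank_of_coe_eq hS)
  refine ⟨monic_prod_of_monic _ _ fun α _ => monic_X_sub_C α, ?_, ?_, a, ha1, ha⟩
  · exact (separable_prod_X_sub_C_iff' (f := id)).mpr (fun _ _ _ _ h => h) |>.squarefree
  · rw [natDegree_prod_of_monic _ _ fun α _ => monic_X_sub_C α]
    simp [hcard]

/-- For an `n`-dimensional `𝔽_r`-subspace `V` of an algebraic closure of `𝔽_r` (with
finite underlying set `S`), the polynomial `f_V = ∏_{α ∈ V} (x - α)` is a monic
squarefree `r`-additive polynomial of degree `rⁿ`. -/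
theorem subspace_polynomial_is_additive
    (p e r : ℕ) [Fact p.Prime] (he : 1 ≤ e) (hr : r = p ^ e)
    (F : Type*) [Field F] [Fintype F] (hF : Fintype.card F = r)
    (n : ℕ) (V : Submodule F (AlgebraicClosure F)) (hV : Module.finrank F V = n)
    (S : Finset (AlgebraicClosure F)) (hS : ↑S = (V : Set (AlgebraicClosure F))) :
    (∏ α ∈ S, (X - C α)).Monic ∧ Squarefree (∏ α ∈ S, (X - C α)) ∧
      (∏ α ∈ S, (X - C α)).natDegree = r ^ n ∧
      ∃ a : ℕ → AlgebraicClosure F, a n = 1 ∧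
        ∏ α ∈ S, (X - C α) = ∑ i ∈ Finset.range (n + 1), C (a i) * X ^ r ^ i :=
  subspace_polynomial_is_additive_general r F hF n V hV S hS
end

section
/- Let h and f be monic squarefree r-additive polynomials over \F_q (q a power of r, r a power of a prime). Then h divides f in \F_q[x] if and only if there exists an r-additive polynomial g over \F_q with f = g \circ h (composition). -/
open Polynomial Finset

private lemma sumform_pow {F : Type*} [Field F] (p e r : ℕ) [Fact p.Prime] [CharP F p]
    (hr : r = p ^ e) (m k : ℕ) (b : ℕ → F) :
    (∑ i ∈ Finset.range (m + 1), C (b i) * X ^ r ^ i) ^ r ^ k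
      = ∑ i ∈ Finset.range (m + 1), C (b i ^ r ^ k) * X ^ r ^ (i + k) := by
  have hrk : r ^ k = p ^ (e * k) := by rw [hr, ← pow_mul]
  rw [hrk, sum_pow_char_pow]
  refine Finset.sum_congr rfl fun i _ => ?_
  rw [mul_pow, ← C_pow, ← pow_mul, ← hrk, ← pow_add]

private lemma coeff_sumform {F : Type*} [Field F] (r : ℕ) (hr2 : 2 ≤ r) (m : ℕ) (b : ℕ → F) :
    (∑ i ∈ Finset.range (m + 1), C (b i) * X ^ r ^ i).coeff (r ^ m) = b m := by
  rw [finset_sum_coeff]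
  rw [Finset.sum_eq_single m]
  · simp [coeff_X_pow]
  · intro i _ hi
    have : r ^ i ≠ r ^ m := fun hc => hi (Nat.pow_right_injective hr2 hc)
    simp [coeff_X_pow, Ne.symm this]
  · intro habs; exact absurd (Finset.self_mem_range_succ m) habs

private lemma dvd_imp_comp {F : Type*} [Field F] (p e r : ℕ) [Fact p.Prime] [CharP F p]
    (he : 1 ≤ e) (hr : r = p ^ e) (m : ℕ) (b : ℕ → F) (hbm : b m = 1)
    (h : Polynomial F) (hh : h = ∑ i ∈ Finset.range (m + 1), C (b i) * X ^ r ^ i) :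
    ∀ n (a : ℕ → F), h ∣ (∑ i ∈ Finset.range (n + 1), C (a i) * X ^ r ^ i) →
      ∃ (k : ℕ) (c : ℕ → F),
        (∑ i ∈ Finset.range (n + 1), C (a i) * X ^ r ^ i)
          = (∑ i ∈ Finset.range (k + 1), C (c i) * X ^ r ^ i).comp h := by
  have hp2 : 2 ≤ p := (Fact.out : p.Prime).two_le
  have hr2 : 2 ≤ r := by
    calc 2 ≤ p := hp2
    _ = p ^ 1 := (pow_one p).symm
    _ ≤ p ^ e := Nat.pow_le_pow_right (by omega) he
    _ = r := hr.symm
  intro n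
  induction n using Nat.strong_induction_on with
  | _ n ih =>
  intro a hdvd
  rcases Nat.eq_zero_or_pos m with hm0 | hm1
  · -- h = X
    subst hm0
    have hX : h = X := by simp [hh, hbm]
    exact ⟨n, a, by rw [hX, comp_X]⟩
  rcases lt_or_ge n m with hnm | hmn
  · -- degree too small: f must be 0
    have hf0 : (∑ i ∈ Finset.range (n + 1), C (a i) * X ^ r ^ i) = 0 := by
      by_contra hne
      have h1 : natDegree h ≤ natDegree (∑ i ∈ Finset.range (n + 1), C (a i) * X ^ r ^ i) :=
        natDegree_le_of_dvd hdvd hne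
      have h2 : natDegree (∑ i ∈ Finset.range (n + 1), C (a i) * X ^ r ^ i) ≤ r ^ n := by
        refine natDegree_sum_le_of_forall_le _ _ fun i hi => ?_
        refine (natDegree_C_mul_le _ _).trans ?_
        rw [natDegree_X_pow]
        exact Nat.pow_le_pow_right (by omega) (Nat.lt_succ_iff.mp (Finset.mem_range.mp hi))
      have h3 : r ^ m ≤ natDegree h := by
        refine le_natDegree_of_ne_zero ?_
        rw [hh, coeff_sumform r hr2 m b, hbm]
        exact one_ne_zero
      have h4 : r ^ n < r ^ m := Nat.pow_lt_pow_right (by omega) hnm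
      omega
    refine ⟨0, fun _ => 0, ?_⟩
    rw [hf0]; simp
  · -- inductive step
    set k0 := n - m with hk0def
    have hk0 : k0 + m = n := Nat.sub_add_cancel hmn
    set t : ℕ → F := fun j => if k0 ≤ j then a n * b (j - k0) ^ r ^ k0 else 0 with ht
    have claim1 : C (a n) * h ^ r ^ k0 = ∑ j ∈ Finset.range (n + 1), C (t j) * X ^ r ^ j := by
      rw [hh, sumform_pow p e r hr m k0 b, Finset.mul_sum]
      have : ∀ j, C (t j) * X ^ r ^ j
          = if k0 ≤ j then C (a n * b (j - k0) ^ r ^ k0) * X ^ r ^ j else 0 := by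
        intro j
        by_cases hj : k0 ≤ j <;> simp [ht, hj]
      rw [Finset.sum_congr rfl fun j _ => this j, ← Finset.sum_filter]
      have hfilt : Finset.filter (fun j => k0 ≤ j) (Finset.range (n + 1))
          = Finset.Ico k0 (n + 1) := by
        rw [Finset.range_eq_Ico, Finset.Ico_filter_le 0 (n + 1) k0,
          Nat.max_eq_right (Nat.zero_le _)]
      rw [hfilt, Finset.sum_Ico_eq_sum_range]
      have hnk : n + 1 - k0 = m + 1 := by omega
      rw [hnk]
      refine Finset.sum_congr rfl fun i _ => ?_
      have h1 : k0 + i - k0 = i := by omega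
      rw [h1, ← mul_assoc, ← C_mul, Nat.add_comm i k0]
    have claim2 : (∑ i ∈ Finset.range (n + 1), C (a i) * X ^ r ^ i)
        = (∑ j ∈ Finset.range (n + 1), C (a j - t j) * X ^ r ^ j) + C (a n) * h ^ r ^ k0 := by
      rw [claim1, ← Finset.sum_add_distrib]
      refine Finset.sum_congr rfl fun j _ => ?_
      rw [← add_mul, ← C_add, sub_add_cancel]
    have htn : t n = a n := by
      have h1 : k0 ≤ n := by omega
      have h2 : n - k0 = m := by omega
      simp [ht, h1, h2, hbm]
    obtain ⟨n', rfl⟩ : ∃ n', n = n' + 1 := ⟨n - 1, by omega⟩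
    have claim3 : (∑ j ∈ Finset.range (n' + 1 + 1), C (a j - t j) * X ^ r ^ j)
        = ∑ j ∈ Finset.range (n' + 1), C (a j - t j) * X ^ r ^ j := by
      rw [Finset.sum_range_succ, htn, sub_self, map_zero, zero_mul, add_zero]
    have hdvd' : h ∣ ∑ j ∈ Finset.range (n' + 1), C (a j - t j) * X ^ r ^ j := by
      rw [← claim3]
      have hpow : h ∣ C (a (n' + 1)) * h ^ r ^ k0 :=
        Dvd.dvd.mul_left (dvd_pow_self h (by positivity)) _
      have := dvd_sub hdvd hpow
      have heq : (∑ i ∈ Finset.range (n' + 1 + 1), C (a i) * X ^ r ^ i)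
          - C (a (n' + 1)) * h ^ r ^ k0
          = ∑ j ∈ Finset.range (n' + 1 + 1), C (a j - t j) * X ^ r ^ j := by
        rw [claim2]; ring
      rwa [heq] at this
    obtain ⟨k', c', hc'⟩ := ih n' (by omega) (fun j => a j - t j) hdvd'
    -- assemble g
    refine ⟨max k' k0, fun i => (if i ≤ k' then c' i else 0) + (if i = k0 then a (n' + 1) else 0), ?_⟩
    have split : (∑ i ∈ Finset.range (max k' k0 + 1),
          C ((if i ≤ k' then c' i else 0) + (if i = k0 then a (n' + 1) else 0)) * X ^ r ^ i)
        = (∑ i ∈ Finset.range (k' + 1), C (c' i) * X ^ r ^ i)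
          + C (a (n' + 1)) * X ^ r ^ k0 := by
      have e1 : ∀ i, C ((if i ≤ k' then c' i else 0) + (if i = k0 then a (n' + 1) else 0)) * X ^ r ^ i
          = C (if i ≤ k' then c' i else 0) * X ^ r ^ i
            + (if i = k0 then C (a (n' + 1)) * X ^ r ^ i else 0) := by
        intro i
        by_cases hik : i = k0 <;> simp [hik, C_add, add_mul]
      rw [Finset.sum_congr rfl fun i _ => e1 i, Finset.sum_add_distrib]
      congr 1
      · refine (Finset.sum_subset (Finset.range_subset_range.mpr (Nat.succ_le_succ (le_max_left _ _))) ?_).symm.trans ?_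
        · intro x _ hx
          have : ¬ x ≤ k' := fun hle => hx (Finset.mem_range.mpr (by omega))
          simp [this]
        · refine Finset.sum_congr rfl fun i hi => ?_
          have : i ≤ k' := by have := Finset.mem_range.mp hi; omega
          simp [this]
      · rw [Finset.sum_ite_eq' (Finset.range (max k' k0 + 1)) k0
          (fun i => C (a (n' + 1)) * X ^ r ^ i)]
        rw [if_pos (Finset.mem_range.mpr (Nat.lt_succ_of_le (le_max_right _ _)))]
    rw [split, add_comp, mul_comp, C_comp, X_pow_comp, ← hc', claim2, claim3]

/-- For monic squarefree `r`-additive polynomials `f, h` over `𝔽_q`, `h` divides `f`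
iff `h` is a right component of `f`, i.e., `f = g ∘ h` for some `r`-additive `g`. -/
theorem dvd_iff_right_component
    (p e d r q : ℕ) [Fact p.Prime] (he : 1 ≤ e) (hr : r = p ^ e)
    (hd : 1 ≤ d) (hq : q = r ^ d)
    (F : Type*) [Field F] [Fintype F] (hF : Fintype.card F = q)
    (n m : ℕ) (a b : ℕ → F) (f h : Polynomial F)
    (hf : f = ∑ i ∈ Finset.range (n + 1), C (a i) * X ^ r ^ i)
    (hfm : a n = 1) (hf0 : a 0 ≠ 0)
    (hh : h = ∑ i ∈ Finset.range (m + 1), C (b i) * X ^ r ^ i)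
    (hhm : b m = 1) (hh0 : b 0 ≠ 0) :
    h ∣ f ↔
      ∃ (k : ℕ) (c : ℕ → F),
        f = (∑ i ∈ Finset.range (k + 1), C (c i) * X ^ r ^ i).comp h := by
  have hp : p.Prime := Fact.out
  haveI hch : CharP F p := by
    obtain ⟨nn, hp', hc⟩ := FiniteField.card F (ringChar F)
    have hcard : Fintype.card F = p ^ (e * d) := by
      rw [hF, hq, hr, ← pow_mul]
    have hdvd : p ∣ (ringChar F) ^ (nn : ℕ) := by
      rw [← hc, hcard]
      exact dvd_pow_self p (Nat.mul_ne_zero (by omega) (by omega))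
    have : p = ringChar F :=
      (Nat.prime_dvd_prime_iff_eq hp hp').mp (hp.dvd_of_dvd_pow hdvd)
    rw [this]
    exact ringChar.charP F
  constructor
  · intro hdvd
    obtain ⟨k, c, hc⟩ := dvd_imp_comp p e r he hr m b hhm h hh n a (hf ▸ hdvd)
    exact ⟨k, c, hf.trans hc⟩
  · rintro ⟨k, c, hc⟩
    have hX : X ∣ (∑ i ∈ Finset.range (k + 1), C (c i) * X ^ r ^ i) := by
      refine Finset.dvd_sum fun i _ => ?_
      refine Dvd.dvd.mul_left (dvd_pow_self X ?_) _
      have : 2 ≤ r := by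
        have : 2 ≤ p := hp.two_le
        calc 2 ≤ p := this
        _ = p ^ 1 := (pow_one p).symm
        _ ≤ p ^ e := Nat.pow_le_pow_right (by omega) he
        _ = r := hr.symm
      positivity
    obtain ⟨u, hu⟩ := hX
    rw [hc, hu, mul_comp, X_comp]
    exact Dvd.intro _ rfl
end

section
/- Every monic r-additive polynomial \bar{f} over a perfect field F of characteristic p (r a power of p) can be written uniquely as \bar{f} = x^{r^m} \circ f with m \geq 0 and f a monic squarefree r-additive polynomial over F. -/
set_option linter.unusedSectionVars false


open Polynomial Finset

section AuxFrobSF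

variable {p e r : ℕ} [Fact p.Prime]
variable {F : Type*} [Field F] [CharP F p] [PerfectField F]

private lemma auxSF_two_le_r (he : 1 ≤ e) (hr : r = p ^ e) : 2 ≤ r := by
  subst hr
  calc 2 ≤ p := (Fact.out : p.Prime).two_le
    _ = p ^ 1 := (pow_one p).symm
    _ ≤ p ^ e := Nat.pow_le_pow_right (Fact.out : p.Prime).pos he

private lemma auxSF_cast_zero (he : 1 ≤ e) (hr : r = p ^ e) {i : ℕ} (hi : 1 ≤ i) :
    ((r ^ i : ℕ) : F) = 0 := by
  rw [CharP.cast_eq_zero_iff F p]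
  subst hr
  rw [← pow_mul]
  exact dvd_pow_self p (by positivity)

private lemma auxSF_coeff_one (he : 1 ≤ e) (hr : r = p ^ e) (n : ℕ) (b : ℕ → F) :
    (∑ i ∈ Finset.range (n + 1), C (b i) * X ^ r ^ i).coeff 1 = b 0 := by
  rw [finset_sum_coeff, Finset.sum_eq_single 0]
  · simp
  · intro i _ hi
    have h2 : 2 ≤ r ^ i := by
      calc 2 ≤ r := auxSF_two_le_r he hr
        _ = r ^ 1 := (pow_one r).symm
        _ ≤ r ^ i := Nat.pow_le_pow_right
            (by have := auxSF_two_le_r he hr; omega) (by omega)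
    have : (1 : ℕ) ≠ r ^ i := by omega
    simp [coeff_X_pow, this]
  · intro h; simp at h

private lemma auxSF_deriv (he : 1 ≤ e) (hr : r = p ^ e) (n : ℕ) (b : ℕ → F) :
    derivative (∑ i ∈ Finset.range (n + 1), C (b i) * X ^ r ^ i) = C (b 0) := by
  rw [derivative_sum, Finset.sum_eq_single 0]
  · simp
  · intro i _ hi
    rw [derivative_C_mul, derivative_X_pow, auxSF_cast_zero he hr (by omega)]
    simp
  · intro h; simp at h

private lemma auxSF_sf (he : 1 ≤ e) (hr : r = p ^ e) (n : ℕ) (b : ℕ → F)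
    (hb : b 0 ≠ 0) :
    Squarefree (∑ i ∈ Finset.range (n + 1), C (b i) * X ^ r ^ i) := by
  apply Polynomial.Separable.squarefree
  rw [Polynomial.separable_def, auxSF_deriv he hr]
  exact ⟨0, C (b 0)⁻¹, by rw [← C_mul, inv_mul_cancel₀ hb]; simp⟩

private lemma auxSF_coeff_ne (he : 1 ≤ e) (hr : r = p ^ e) (n : ℕ) (b : ℕ → F)
    (hsf : Squarefree (∑ i ∈ Finset.range (n + 1), C (b i) * X ^ r ^ i)) :
    b 0 ≠ 0 := by
  intro hb0
  have hdvd : (X : F[X]) * X ∣ ∑ i ∈ Finset.range (n + 1), C (b i) * X ^ r ^ i := by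
    rw [← sq]
    apply Finset.dvd_sum
    intro i _
    rcases Nat.eq_zero_or_pos i with hi | hi
    · subst hi; rw [hb0]; simp
    · apply dvd_mul_of_dvd_right
      apply pow_dvd_pow
      calc 2 ≤ r := auxSF_two_le_r he hr
        _ = r ^ 1 := (pow_one r).symm
        _ ≤ r ^ i := Nat.pow_le_pow_right
            (by have := auxSF_two_le_r he hr; omega) (by omega)
  exact Polynomial.not_isUnit_X (hsf X hdvd)

private lemma auxSF_pow_inj (he : 1 ≤ e) (hr : r = p ^ e)
    {R : Type*} [CommRing R] [IsDomain R] [CharP R p] (A B : R) (k : ℕ)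
    (h : A ^ r ^ k = B ^ r ^ k) : A = B := by
  subst hr
  rw [show (p ^ e) ^ k = p ^ (e * k) from (pow_mul p e k).symm] at h
  have hz : (A - B) ^ p ^ (e * k) = 0 := by
    rw [sub_pow_char_pow, h, sub_self]
  have hne : p ^ (e * k) ≠ 0 := pow_ne_zero _ (Fact.out : p.Prime).pos.ne'
  exact sub_eq_zero.mp ((pow_eq_zero_iff hne).mp hz)

private lemma auxSF_root (he : 1 ≤ e) (hr : r = p ^ e) (y : F) : ∃ x : F, x ^ r = y := by
  haveI : ExpChar F p := .prime Fact.out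
  obtain ⟨x, hx⟩ := (PerfectRing.bijective_frobenius (R := F) (p := p)).2.iterate e y
  exact ⟨x, by rw [hr, ← iterate_frobenius]; exact hx⟩

private lemma auxSF_exists (he : 1 ≤ e) (hr : r = p ^ e) :
    ∀ (n : ℕ) (a : ℕ → F) (fb : F[X]), fb.Monic →
      fb = ∑ i ∈ Finset.range (n + 1), C (a i) * X ^ r ^ i →
      ∃ (m : ℕ) (f : F[X]), fb = f ^ r ^ m ∧ f.Monic ∧ Squarefree f ∧
        ∃ (n' : ℕ) (b : ℕ → F), f = ∑ i ∈ Finset.range (n' + 1), C (b i) * X ^ r ^ i := by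
  intro n
  induction n with
  | zero =>
    intro a fb hm heq
    have ha0 : a 0 ≠ 0 := by
      intro h
      rw [Finset.range_one, Finset.sum_singleton, h] at heq
      simp at heq
      exact hm.ne_zero heq
    exact ⟨0, fb, by simp, hm, heq ▸ auxSF_sf he hr 0 a ha0, 0, a, heq⟩
  | succ n ih =>
    intro a fb hm heq
    by_cases h0 : a 0 = 0
    · -- extract r-th roots
      choose c hc using fun i => auxSF_root he hr (a (i + 1))
      have hg : (∑ i ∈ Finset.range (n + 1), C (c i) * X ^ r ^ i) ^ r = fb := by
        haveI : ExpChar F p := .prime Fact.out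
        rw [hr, sum_pow_char_pow]
        rw [heq, Finset.sum_range_succ' (fun i => C (a i) * X ^ r ^ i) (n + 1)]
        simp only [pow_zero, h0, map_zero, zero_mul, add_zero]
        apply Finset.sum_congr rfl
        intro i _
        rw [mul_pow, ← C_pow, ← pow_mul, ← hr, hc, ← pow_succ]
      set g : F[X] := ∑ i ∈ Finset.range (n + 1), C (c i) * X ^ r ^ i with hgdef
      have hgm : g.Monic := by
        have h1 : g.leadingCoeff ^ r ^ 1 = (1 : F) ^ r ^ 1 := by
          rw [pow_one, ← leadingCoeff_pow, hg, hm.leadingCoeff, one_pow]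
        exact auxSF_pow_inj he hr _ _ 1 h1
      obtain ⟨m, f, hfb, hfm, hfsf, hrep⟩ := ih c g hgm rfl
      refine ⟨m + 1, f, ?_, hfm, hfsf, hrep⟩
      rw [← hg, hfb, ← pow_mul, ← pow_succ]
    · refine ⟨0, fb, by simp, hm, heq ▸ auxSF_sf he hr (n + 1) a h0, n + 1, a, heq⟩

private lemma auxSF_uniq_le (he : 1 ≤ e) (hr : r = p ^ e)
    (m m' : ℕ) (f g : F[X]) (hle : m ≤ m')
    (h : f ^ r ^ m = g ^ r ^ m')
    (hfsf : Squarefree f)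
    (hfrep : ∃ (n : ℕ) (b : ℕ → F), f = ∑ i ∈ Finset.range (n + 1), C (b i) * X ^ r ^ i) :
    m = m' ∧ f = g := by
  have hrpos : 0 < r := by have := auxSF_two_le_r he hr; omega
  have hkey : f = g ^ r ^ (m' - m) := by
    apply auxSF_pow_inj he hr _ _ m
    rw [h, ← pow_mul, ← pow_add, Nat.sub_add_cancel hle]
  rcases Nat.eq_zero_or_pos (m' - m) with hs | hs
  · rw [hs, pow_zero, pow_one] at hkey
    exact ⟨by omega, hkey⟩
  · exfalso
    obtain ⟨nn, b, hbrep⟩ := hfrep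
    have hb0 : b 0 ≠ 0 := auxSF_coeff_ne he hr nn b (hbrep ▸ hfsf)
    have hd : derivative f = C (b 0) := by rw [hbrep, auxSF_deriv he hr]
    have hd0 : derivative f = 0 := by
      rw [hkey, derivative_pow, auxSF_cast_zero he hr (by omega : 1 ≤ m' - m)]
      simp
    rw [hd] at hd0
    exact hb0 (by simpa using hd0)

end AuxFrobSF

/-- Every monic `r`-additive polynomial over a perfect field of characteristic `p`
(`r` a power of `p`) can be written uniquely as `x^{r^m} ∘ f` with `f` monic
squarefree `r`-additive. -/
theorem unique_decomposition_frobenius_squarefree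
    (p e r : ℕ) [Fact p.Prime] (he : 1 ≤ e) (hr : r = p ^ e)
    (F : Type*) [Field F] [CharP F p] [PerfectField F]
    (fbar : Polynomial F) (hmonic : fbar.Monic)
    (hadd : ∃ (n : ℕ) (a : ℕ → F),
      fbar = ∑ i ∈ Finset.range (n + 1), C (a i) * X ^ r ^ i) :
    ∃! mf : ℕ × Polynomial F,
      fbar = (X ^ r ^ mf.1 : Polynomial F).comp mf.2 ∧
        mf.2.Monic ∧ Squarefree mf.2 ∧
        ∃ (m : ℕ) (b : ℕ → F),
          mf.2 = ∑ i ∈ Finset.range (m + 1), C (b i) * X ^ r ^ i := by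
  obtain ⟨n, a, heq⟩ := hadd
  obtain ⟨m, f, hfb, hfm, hfsf, hfrep⟩ := auxSF_exists he hr n a fbar hmonic heq
  have huniq : ∀ (m' : ℕ) (g : F[X]), fbar = g ^ r ^ m' → g.Monic → Squarefree g →
      (∃ (n' : ℕ) (b : ℕ → F), g = ∑ i ∈ Finset.range (n' + 1), C (b i) * X ^ r ^ i) →
      m' = m ∧ g = f := by
    intro m' g hgb hgm hgsf hgrep
    have hfg : f ^ r ^ m = g ^ r ^ m' := by rw [← hfb, hgb]
    rcases le_total m m' with hle | hle
    · obtain ⟨h1, h2⟩ := auxSF_uniq_le he hr m m' f g hle hfg hfsf hfrep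
      exact ⟨h1.symm, h2.symm⟩
    · obtain ⟨h1, h2⟩ := auxSF_uniq_le he hr m' m g f hle hfg.symm hgsf hgrep
      exact ⟨h1, h2⟩
  refine ⟨(m, f), ⟨by rw [X_pow_comp]; exact hfb, hfm, hfsf, hfrep⟩, ?_⟩
  rintro ⟨m', g⟩ ⟨hgb, hgm, hgsf, hgrep⟩
  rw [X_pow_comp] at hgb
  obtain ⟨h1, h2⟩ := huniq m' g hgb hgm hgsf hgrep
  simp [Prod.ext_iff, h1, h2]
end

section
/- Let f be a monic squarefree r-additive polynomial over \F_q (q a power of r) and a \in \F_q nonzero. Then x^r - a x is a right component of f if and only if a is a root of the projective polynomial \pi_{r-1}(f), where \pi_{r-1}(\sum_i a_i x^{r^i}) = \sum_i a_i x^{(r^i-1)/(r-1)}. -/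
open Polynomial Finset

/-- A polynomial is "additive-shaped" for `r`. -/
def AddiP {F : Type*} [Field F] (r : ℕ) (g : Polynomial F) : Prop :=
  ∃ (k : ℕ) (b : ℕ → F), g = ∑ j ∈ Finset.range (k + 1), C (b j) * X ^ r ^ j

section Aux
variable {F : Type*} [Field F] {r : ℕ}

lemma addiP_extend {k K : ℕ} (b : ℕ → F) (hkK : k ≤ K) :
    ∑ j ∈ Finset.range (k + 1), C (b j) * X ^ r ^ j
      = ∑ j ∈ Finset.range (K + 1), C (if j < k + 1 then b j else 0) * X ^ r ^ j := by
  rw [← Finset.sum_subset (Finset.range_subset_range.2 (by omega : k + 1 ≤ K + 1))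
      (fun j _ hj => by simp only [Finset.mem_range] at hj; simp [hj])]
  apply Finset.sum_congr rfl
  intro j hj
  simp only [Finset.mem_range] at hj
  simp [hj]

lemma addiP_add {g₁ g₂ : Polynomial F} (h1 : AddiP r g₁) (h2 : AddiP r g₂) :
    AddiP r (g₁ + g₂) := by
  obtain ⟨k1, b1, rfl⟩ := h1
  obtain ⟨k2, b2, rfl⟩ := h2
  refine ⟨max k1 k2, (fun j => (if j < k1 + 1 then b1 j else 0) + (if j < k2 + 1 then b2 j else 0)), ?_⟩
  simp only []
  rw [addiP_extend b1 (le_max_left k1 k2), addiP_extend b2 (le_max_right k1 k2),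
    ← Finset.sum_add_distrib]
  apply Finset.sum_congr rfl
  intro j _
  simp [add_mul]

lemma addiP_smul (c : F) {g : Polynomial F} (h : AddiP r g) : AddiP r (C c * g) := by
  obtain ⟨k, b, rfl⟩ := h
  refine ⟨k, fun j => c * b j, ?_⟩
  rw [Finset.mul_sum]
  apply Finset.sum_congr rfl
  intro j _
  simp [mul_assoc]

lemma addiP_X : AddiP r (X : Polynomial F) :=
  ⟨0, fun _ => 1, by simp⟩

lemma addiP_zero : AddiP r (0 : Polynomial F) :=
  ⟨0, fun _ => 0, by simp⟩

lemma addiP_pow {p e : ℕ} [Fact p.Prime] [CharP F p] (hre : r = p ^ e)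
    {g : Polynomial F} (h : AddiP r g) : AddiP r (g ^ r) := by
  obtain ⟨k, b, rfl⟩ := h
  refine ⟨k + 1, fun j => if j = 0 then 0 else b (j - 1) ^ r, ?_⟩
  have hc : CharP (Polynomial F) p := inferInstance
  rw [hre, sum_pow_char_pow, ← hre]
  conv_rhs => rw [Finset.sum_range_succ']
  simp only [Nat.add_sub_cancel, Nat.succ_ne_zero, if_false, eq_self_iff_true, if_true,
    map_zero, zero_mul, add_zero]
  apply Finset.sum_congr rfl
  intro j _
  rw [mul_pow, ← map_pow, ← pow_mul, ← pow_succ]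

end Aux

/-- `r`-norm recursion: `Nrec i = a ^ ((r^i - 1)/(r - 1))`. -/
def Nrec {F : Type*} [Field F] (r : ℕ) (a : F) : ℕ → F
  | 0 => 1
  | i + 1 => Nrec r a i ^ r * a

/-- Auxiliary exponent sequence. -/
def sfun (r : ℕ) : ℕ → ℕ
  | 0 => 0
  | i + 1 => r * sfun r i + 1

lemma sfun_spec {r : ℕ} (i : ℕ) : (r - 1) * sfun r i + 1 = r ^ i ∨ r < 2 := by
  by_cases hr2 : 2 ≤ r
  · left
    obtain ⟨m, rfl⟩ : ∃ m, r = m + 1 := ⟨r - 1, by omega⟩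
    induction i with
    | zero => simp [sfun]
    | succ i ih =>
      rw [sfun, pow_succ, ← ih]
      simp only [Nat.add_sub_cancel]
      ring
  · right; omega

lemma sfun_div {r : ℕ} (hr2 : 2 ≤ r) (i : ℕ) : sfun r i = (r ^ i - 1) / (r - 1) := by
  rcases sfun_spec (r := r) i with h | h
  · symm
    exact Nat.div_eq_of_eq_mul_right (by omega) (by omega)
  · omega

lemma nrec_eq {F : Type*} [Field F] {r : ℕ} (hr2 : 2 ≤ r) (a : F) (i : ℕ) :
    Nrec r a i = a ^ ((r ^ i - 1) / (r - 1)) := by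
  rw [← sfun_div hr2]
  induction i with
  | zero => simp [Nrec, sfun]
  | succ i ih =>
    rw [Nrec, sfun, ih, pow_succ, pow_mul']

section Key
variable {F : Type*} [Field F] {p e r : ℕ} [Fact p.Prime] [CharP F p]

lemma key (hre : r = p ^ e) (a : F) (i : ℕ) :
    ∃ g : Polynomial F, AddiP r g ∧
      (X : Polynomial F) ^ r ^ i
        = g.comp (X ^ r - C a * X) + C (Nrec r a i) * X := by
  induction i with
  | zero => exact ⟨0, addiP_zero, by simp [Nrec]⟩
  | succ i ih =>
    obtain ⟨g, hg, hgi⟩ := ih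
    refine ⟨g ^ r + C (Nrec r a i ^ r) * X,
      addiP_add (addiP_pow hre hg) (addiP_smul _ addiP_X), ?_⟩
    have h1 : (X : Polynomial F) ^ r ^ (i + 1) = ((X : Polynomial F) ^ r ^ i) ^ r := by
      rw [← pow_mul, pow_succ]
    rw [h1, hgi, hre, add_pow_char_pow, ← hre, add_comp, pow_comp, mul_comp, C_comp, X_comp,
      mul_pow, ← C_pow, show Nrec r a (i + 1) = Nrec r a i ^ r * a from rfl, map_mul]
    ring

lemma sumkey (hre : r = p ^ e) (a : F) (c : ℕ → F) (m : ℕ) :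
    ∃ g : Polynomial F, AddiP r g ∧
      ∑ i ∈ Finset.range m, C (c i) * X ^ r ^ i
        = g.comp (X ^ r - C a * X) + C (∑ i ∈ Finset.range m, c i * Nrec r a i) * X := by
  induction m with
  | zero => exact ⟨0, addiP_zero, by simp⟩
  | succ m ih =>
    obtain ⟨g, hg, he⟩ := ih
    obtain ⟨gi, hgi, hei⟩ := key hre a m
    refine ⟨g + C (c m) * gi, addiP_add hg (addiP_smul _ hgi), ?_⟩
    rw [Finset.sum_range_succ, Finset.sum_range_succ (f := fun i => c i * Nrec r a i),
      he, hei, add_comp, mul_comp, C_comp, map_add, map_mul]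
    ring

end Key

lemma deg_zero {F : Type*} [Field F] {r : ℕ} (hr2 : 2 ≤ r) (a c : F) (D : Polynomial F)
    (h : D.comp (X ^ r - C a * X) = C c * X) : c = 0 := by
  by_contra hc
  have hh : (X ^ r - C a * X : Polynomial F).natDegree = r := by
    have hlt : ((C a * X : Polynomial F)).natDegree < ((X : Polynomial F) ^ r).natDegree := by
      rw [natDegree_X_pow]
      exact lt_of_le_of_lt ((natDegree_C_mul_le a X).trans_eq natDegree_X) (by omega)
    rw [natDegree_sub_eq_left_of_natDegree_lt hlt, natDegree_X_pow]
  have h1 : (C c * X : Polynomial F).natDegree = 1 := by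
    rw [natDegree_C_mul hc, natDegree_X]
  have h2 := natDegree_comp (p := D) (q := X ^ r - C a * X)
  rw [h, h1, hh] at h2
  have hdvd : r ∣ 1 := Dvd.intro_left D.natDegree h2.symm
  have := Nat.le_of_dvd one_pos hdvd
  omega

/-- For a monic squarefree `r`-additive `f` over `𝔽_q` and `a ≠ 0`, the polynomial
`xʳ - ax` is a right component of `f` iff `a` is a root of the projective polynomial
`π_{r-1}(f)`. -/
theorem linear_right_component_iff_projective_root
    (p e d r q : ℕ) [Fact p.Prime] (he : 1 ≤ e) (hr : r = p ^ e)
    (hd : 1 ≤ d) (hq : q = r ^ d)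
    (F : Type*) [Field F] [Fintype F] (hF : Fintype.card F = q)
    (n : ℕ) (cf : ℕ → F) (f : Polynomial F)
    (hf : f = ∑ i ∈ Finset.range (n + 1), C (cf i) * X ^ r ^ i)
    (hm : cf n = 1) (h0 : cf 0 ≠ 0)
    (a : F) (ha : a ≠ 0) :
    (∃ (k : ℕ) (b : ℕ → F),
        f = (∑ i ∈ Finset.range (k + 1), C (b i) * X ^ r ^ i).comp
          (X ^ r - C a * X)) ↔
      Polynomial.eval a
        (∑ i ∈ Finset.range (n + 1), C (cf i) * X ^ ((r ^ i - 1) / (r - 1))) = 0 := by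
  subst hr hq
  have hprime : p.Prime := Fact.out
  have hr2 : 2 ≤ p ^ e :=
    le_trans hprime.two_le (Nat.le_self_pow (by omega) p)
  haveI : CharP F (ringChar F) := ringChar.charP F
  obtain ⟨m, hpr, hcard⟩ := FiniteField.card F (ringChar F)
  have hpp : p = ringChar F := by
    have h1 : p ∣ ringChar F ^ (m : ℕ) := by
      rw [← hcard, hF, ← pow_mul]
      exact dvd_pow_self p (Nat.mul_ne_zero (by omega) (by omega))
    exact (Nat.prime_dvd_prime_iff_eq hprime hpr).mp (hprime.dvd_of_dvd_pow h1)
  haveI : CharP F p := hpp ▸ ringChar.charP F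
  obtain ⟨g, hg, hid⟩ := sumkey (p := p) (e := e) rfl a cf (n + 1)
  have evalP : Polynomial.eval a
      (∑ i ∈ Finset.range (n + 1), C (cf i) * X ^ (((p ^ e) ^ i - 1) / (p ^ e - 1)))
        = ∑ i ∈ Finset.range (n + 1), cf i * Nrec (p ^ e) a i := by
    rw [eval_finset_sum]
    apply Finset.sum_congr rfl
    intro i _
    rw [eval_mul, eval_C, eval_pow, eval_X, nrec_eq hr2]
  rw [evalP]
  constructor
  · rintro ⟨k, b, hfe⟩
    exact deg_zero hr2 a _
      ((∑ i ∈ Finset.range (k + 1), C (b i) * X ^ (p ^ e) ^ i) - g)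
      (by rw [sub_comp, ← hfe, hf, hid]; ring)
  · intro hev
    obtain ⟨k, b, hgb⟩ := hg
    exact ⟨k, b, by rw [hf, hid, hev, map_zero, zero_mul, add_zero, hgb]⟩
end

section
/- Let A = diag(J_u^{(\ell_1)}, ..., J_u^{(\ell_s)}) over \F_r with u linear and species (\lambda_1,...,\lambda_k) where \lambda_j counts the blocks of order j. The number of 1-dimensional A-invariant subspaces U with depth exactly i (depth = minimal block size acting nontrivially on U) equals r^{\lambda_{i+1}+\cdots+\lambda_k} \cdot (r^{\lambda_i}-1)/(r-1). -/
open Polynomial Finset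
open scoped Classical

def stdJordanBlock (F : Type*) [Field F] (a : F) (ℓ : ℕ) : Matrix (Fin ℓ) (Fin ℓ) F :=
  fun i j => if i = j then a else if (j : ℕ) = (i : ℕ) + 1 then 1 else 0

/-- embed a vector `w : Fin s → F` as block-leading-coordinates vector -/
def ewVec {F : Type*} [Field F] {s : ℕ} {ℓ : Fin s → ℕ} (w : Fin s → F) :
    ((b : Fin s) × Fin (ℓ b)) → F :=
  fun q => if (q.2 : ℕ) = 0 then w q.1 else 0

lemma mulVec_blockDiagonal' {F : Type*} [Field F] {s : ℕ} {ℓ : Fin s → ℕ}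
    (M : (b : Fin s) → Matrix (Fin (ℓ b)) (Fin (ℓ b)) F)
    (v : ((b : Fin s) × Fin (ℓ b)) → F) (b : Fin s) (x : Fin (ℓ b)) :
    (Matrix.blockDiagonal' M).mulVec v ⟨b, x⟩
      = (M b).mulVec (fun y => v ⟨b, y⟩) x := by
  rw [Matrix.mulVec, dotProduct, ← Finset.univ_sigma_univ, Finset.sum_sigma]
  rw [Finset.sum_eq_single b]
  · simp [Matrix.mulVec, dotProduct, Matrix.blockDiagonal'_apply_eq]
  · intro b' _ hb'
    apply Finset.sum_eq_zero
    intro y _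
    rw [Matrix.blockDiagonal'_apply_ne _ _ _ (Ne.symm hb'), zero_mul]
  · simp

lemma jordan_mulVec {F : Type*} [Field F] (a : F) (n : ℕ) (f : Fin n → F) (x : Fin n) :
    (stdJordanBlock F a n).mulVec f x
      = a * f x + (if h : (x : ℕ) + 1 < n then f ⟨x + 1, h⟩ else 0) := by
  rw [Matrix.mulVec, dotProduct]
  rw [show (Finset.univ : Finset (Fin n)) = {x} ∪ (Finset.univ \ {x}) by
    simp [Finset.union_sdiff_of_subset]]
  rw [Finset.sum_union (Finset.disjoint_sdiff)]
  simp only [Finset.sum_singleton]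
  have h1 : stdJordanBlock F a n x x = a := by simp [stdJordanBlock]
  rw [h1]
  congr 1
  by_cases h : (x : ℕ) + 1 < n
  · rw [dif_pos h]
    rw [Finset.sum_eq_single (⟨(x:ℕ)+1, h⟩ : Fin n)]
    · have : stdJordanBlock F a n x ⟨(x:ℕ)+1, h⟩ = 1 := by
        simp [stdJordanBlock, Fin.ext_iff]
      rw [this, one_mul]
    · intro j hj hjx
      have hjx2 : j ≠ x := by
        intro hh; subst hh; simp at hj
      have : stdJordanBlock F a n x j = 0 := by
        simp only [stdJordanBlock]
        rw [if_neg (by exact fun hh => hjx2 (by exact hh.symm ▸ rfl)), if_neg]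
        intro hc
        exact hjx (Fin.ext hc)
      rw [this, zero_mul]
    · intro hx
      simp [Fin.ext_iff] at hx
  · rw [dif_neg h]
    apply Finset.sum_eq_zero
    intro j hj
    have hjx : j ≠ x := by simpa using (Finset.mem_sdiff.mp hj).2
    have : stdJordanBlock F a n x j = 0 := by
      simp only [stdJordanBlock]
      rw [if_neg (fun hh => hjx hh.symm), if_neg]
      intro hc
      exact h (hc ▸ j.isLt)
    rw [this, zero_mul]

section Classify
variable {F : Type*} [Field F] {s : ℕ} {ℓ : Fin s → ℕ} {a c : F}
  {v : ((b : Fin s) × Fin (ℓ b)) → F}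

lemma entry_eq (h : (Matrix.blockDiagonal' (fun b => stdJordanBlock F a (ℓ b))).mulVec v = c • v)
    (b : Fin s) (x : Fin (ℓ b)) :
    c * v ⟨b, x⟩ = a * v ⟨b, x⟩ + (if h' : (x : ℕ) + 1 < ℓ b then v ⟨b, ⟨x + 1, h'⟩⟩ else 0) := by
  have := congrFun h ⟨b, x⟩
  rw [mulVec_blockDiagonal', jordan_mulVec] at this
  simp only [Pi.smul_apply, smul_eq_mul] at this
  exact this.symm

lemma eig_ne_zero (hc : c ≠ a)
    (h : (Matrix.blockDiagonal' (fun b => stdJordanBlock F a (ℓ b))).mulVec v = c • v) :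
    v = 0 := by
  funext q
  obtain ⟨b, x⟩ := q
  have key : ∀ m : ℕ, ∀ x : Fin (ℓ b), ℓ b ≤ (x : ℕ) + 1 + m → v ⟨b, x⟩ = 0 := by
    intro m
    induction m with
    | zero =>
      intro x hx
      have he := entry_eq h b x
      rw [dif_neg (by omega)] at he
      have : (c - a) * v ⟨b, x⟩ = 0 := by ring_nf; linear_combination he
      rcases mul_eq_zero.mp this with h0 | h0
      · exact absurd (sub_eq_zero.mp h0) hc
      · exact h0
    | succ m ih =>
      intro x hx
      have he := entry_eq h b x
      by_cases h' : (x : ℕ) + 1 < ℓ b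
      · rw [dif_pos h'] at he
        rw [ih ⟨x + 1, h'⟩ (by simp; omega)] at he
        have : (c - a) * v ⟨b, x⟩ = 0 := by linear_combination he
        rcases mul_eq_zero.mp this with h0 | h0
        · exact absurd (sub_eq_zero.mp h0) hc
        · exact h0
      · rw [dif_neg h'] at he
        have : (c - a) * v ⟨b, x⟩ = 0 := by linear_combination he
        rcases mul_eq_zero.mp this with h0 | h0
        · exact absurd (sub_eq_zero.mp h0) hc
        · exact h0
  exact key (ℓ b) x (by omega)

lemma eig_a_supp
    (h : (Matrix.blockDiagonal' (fun b => stdJordanBlock F a (ℓ b))).mulVec v = a • v)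
    (b : Fin s) (x : Fin (ℓ b)) (hx : (x : ℕ) ≠ 0) : v ⟨b, x⟩ = 0 := by
  have hy : (x : ℕ) - 1 + 1 < ℓ b := by have := x.isLt; omega
  have he := entry_eq h b ⟨(x : ℕ) - 1, by omega⟩
  rw [dif_pos (by simpa using hy)] at he
  simp only at he
  have hxx : (⟨(x : ℕ) - 1 + 1, by simpa using hy⟩ : Fin (ℓ b)) = x := by
    apply Fin.ext; simp; omega
  rw [hxx] at he
  linear_combination -he

lemma mulVec_ewVec (w : Fin s → F) :
    (Matrix.blockDiagonal' (fun b => stdJordanBlock F a (ℓ b))).mulVec (ewVec w)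
      = a • ewVec w := by
  funext q
  obtain ⟨b, x⟩ := q
  rw [mulVec_blockDiagonal', jordan_mulVec]
  have h0 : (if h' : (x : ℕ) + 1 < ℓ b then ewVec w ⟨b, ⟨x + 1, h'⟩⟩ else 0) = 0 := by
    split
    · simp [ewVec]
    · rfl
  rw [h0, add_zero, Pi.smul_apply, smul_eq_mul]

lemma ewVec_ne_zero (hl : ∀ b, 1 ≤ ℓ b) {w : Fin s → F} (hw : w ≠ 0) :
    ewVec (ℓ := ℓ) w ≠ 0 := by
  obtain ⟨b, hb⟩ := Function.ne_iff.mp hw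
  intro h
  apply hb
  have := congrFun h ⟨b, ⟨0, hl b⟩⟩
  simpa [ewVec] using this

lemma span_classify (hl : ∀ b, 1 ≤ ℓ b)
    (U : Submodule F (((b : Fin s) × Fin (ℓ b)) → F)) :
    (Module.finrank F U = 1 ∧
      (∀ v ∈ U, (Matrix.blockDiagonal' (fun b => stdJordanBlock F a (ℓ b))).mulVec v ∈ U)) ↔
    ∃ w : Fin s → F, w ≠ 0 ∧ U = Submodule.span F {ewVec w} := by
  constructor
  · rintro ⟨h1, h2⟩
    have hnt : Nontrivial U := Module.nontrivial_of_finrank_pos (R := F) (by omega)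
    obtain ⟨v₀, hv₀⟩ := exists_ne (0 : U)
    have hspan : U = Submodule.span F {(v₀ : ((b : Fin s) × Fin (ℓ b)) → F)} := by
      apply le_antisymm
      · intro u hu
        obtain ⟨c, hc⟩ := exists_smul_eq_of_finrank_eq_one h1 hv₀ ⟨u, hu⟩
        rw [Submodule.mem_span_singleton]
        exact ⟨c, congrArg Subtype.val hc⟩
      · rw [Submodule.span_le, Set.singleton_subset_iff]
        exact v₀.2
    have hv₀v : (v₀ : ((b : Fin s) × Fin (ℓ b)) → F) ≠ 0 := by
      intro h
      exact hv₀ (Subtype.ext h)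
    have hin : (Matrix.blockDiagonal' (fun b => stdJordanBlock F a (ℓ b))).mulVec (v₀ : ((b : Fin s) × Fin (ℓ b)) → F) ∈ Submodule.span F {(v₀ : ((b : Fin s) × Fin (ℓ b)) → F)} := by
      rw [← hspan]; exact h2 v₀ v₀.2
    rw [Submodule.mem_span_singleton] at hin
    obtain ⟨c, hc⟩ := hin
    by_cases hca : c = a
    · subst hca
      set w : Fin s → F := fun b => (v₀ : ((b : Fin s) × Fin (ℓ b)) → F) ⟨b, ⟨0, hl b⟩⟩ with hwdef
      have hv : (v₀ : ((b : Fin s) × Fin (ℓ b)) → F) = ewVec w := by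
        funext q
        obtain ⟨b, x⟩ := q
        by_cases hx : (x : ℕ) = 0
        · have : x = ⟨0, hl b⟩ := Fin.ext hx
          subst this
          simp [ewVec, hwdef]
        · rw [eig_a_supp hc.symm b x hx]
          simp [ewVec, hx]
      refine ⟨w, ?_, by rw [hspan, hv]⟩
      intro hw
      apply hv₀v
      rw [hv, hw]
      funext q
      simp [ewVec]
    · exact absurd (eig_ne_zero hca hc.symm) hv₀v
  · rintro ⟨w, hw, rfl⟩
    refine ⟨finrank_span_singleton (ewVec_ne_zero hl hw), ?_⟩
    intro v hv
    rw [Submodule.mem_span_singleton] at hv ⊢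
    obtain ⟨c, rfl⟩ := hv
    refine ⟨c * a, ?_⟩
    rw [Matrix.mulVec_smul, mulVec_ewVec, smul_smul]
end Classify

section Depth
variable {F : Type*} [Field F] {s : ℕ} {ℓ : Fin s → ℕ}

lemma ewVec_smul (c : F) (w : Fin s → F) :
    ewVec (ℓ := ℓ) (c • w) = c • ewVec (ℓ := ℓ) w := by
  funext q
  by_cases h : (q.2 : ℕ) = 0 <;> simp [ewVec, h]

lemma ewVec_inj (hl : ∀ b, 1 ≤ ℓ b) {w w' : Fin s → F}
    (h : ewVec (ℓ := ℓ) w = ewVec (ℓ := ℓ) w') : w = w' := by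
  funext b
  have := congrFun h ⟨b, ⟨0, hl b⟩⟩
  simpa [ewVec] using this

lemma depth_set_eq (hl : ∀ b, 1 ≤ ℓ b) (w : Fin s → F) :
    {m : ℕ | ∃ b : Fin s, ℓ b = m ∧
        ∃ v ∈ Submodule.span F {ewVec (ℓ := ℓ) w}, ∃ x : Fin (ℓ b), v ⟨b, x⟩ ≠ 0}
      = {m : ℕ | ∃ b : Fin s, ℓ b = m ∧ w b ≠ 0} := by
  ext m
  simp only [Set.mem_setOf_eq]
  constructor
  · rintro ⟨b, hbm, v, hv, x, hx⟩
    refine ⟨b, hbm, ?_⟩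
    rw [Submodule.mem_span_singleton] at hv
    obtain ⟨c, rfl⟩ := hv
    intro hwb
    apply hx
    by_cases h0 : (x : ℕ) = 0 <;> simp [ewVec, h0, hwb]
  · rintro ⟨b, hbm, hwb⟩
    exact ⟨b, hbm, ewVec w, Submodule.mem_span_singleton_self _, ⟨0, hl b⟩,
      by simpa [ewVec] using hwb⟩

lemma sInf_depth_iff {w : Fin s → F} {i : ℕ} (hi : 1 ≤ i) :
    sInf {m : ℕ | ∃ b : Fin s, ℓ b = m ∧ w b ≠ 0} = i ↔
      (∃ b, ℓ b = i ∧ w b ≠ 0) ∧ ∀ b, w b ≠ 0 → i ≤ ℓ b := by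
  constructor
  · intro h
    have hne : {m : ℕ | ∃ b : Fin s, ℓ b = m ∧ w b ≠ 0}.Nonempty := by
      by_contra hc
      rw [Set.not_nonempty_iff_eq_empty] at hc
      rw [hc, Nat.sInf_empty] at h
      omega
    have hmem := Nat.sInf_mem hne
    rw [h] at hmem
    refine ⟨hmem, ?_⟩
    intro b hb
    have := Nat.sInf_le (s := {m : ℕ | ∃ b : Fin s, ℓ b = m ∧ w b ≠ 0}) ⟨b, rfl, hb⟩
    omega
  · rintro ⟨⟨b, hb, hwb⟩, hlb⟩
    apply le_antisymm
    · exact Nat.sInf_le ⟨b, hb, hwb⟩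
    · have hne : {m : ℕ | ∃ b : Fin s, ℓ b = m ∧ w b ≠ 0}.Nonempty := ⟨i, ⟨b, hb, hwb⟩⟩
      apply le_csInf hne
      rintro m ⟨b', hb', hwb'⟩
      exact hb' ▸ hlb b' hwb'
end Depth

section Count
variable {F : Type*} [Field F] [Fintype F] {s : ℕ}

noncomputable def splitEquiv (ℓ : Fin s → ℕ) (i : ℕ) :
    {w : Fin s → F // (∃ b, ℓ b = i ∧ w b ≠ 0) ∧ ∀ b, w b ≠ 0 → i ≤ ℓ b} ≃
      {g : {b : Fin s // ℓ b = i} → F // g ≠ 0} × ({b : Fin s // i < ℓ b} → F) where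
  toFun w := ⟨⟨fun b => w.1 b.1, by
      obtain ⟨⟨b, hb, hwb⟩, _⟩ := w.2
      intro hg
      exact hwb (by simpa using congrFun hg ⟨b, hb⟩)⟩,
    fun b => w.1 b.1⟩
  invFun gh := ⟨fun b => if hb : ℓ b = i then gh.1.1 ⟨b, hb⟩
      else if hb2 : i < ℓ b then gh.2 ⟨b, hb2⟩ else 0, by
    constructor
    · obtain ⟨b, hb⟩ := Function.ne_iff.mp gh.1.2
      refine ⟨b.1, b.2, ?_⟩
      beta_reduce
      rw [dif_pos b.2]
      simpa using hb
    · intro b hb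
      by_cases h1 : ℓ b = i
      · omega
      · by_cases h2 : i < ℓ b
        · omega
        · beta_reduce at hb
          rw [dif_neg h1, dif_neg h2] at hb
          exact absurd rfl hb⟩
  left_inv w := by
    apply Subtype.ext
    funext b
    by_cases h1 : ℓ b = i
    · simp [h1]
    · by_cases h2 : i < ℓ b
      · simp [h1, h2]
      · simp only [dif_neg h1, dif_neg h2]
        by_contra hne
        have := w.2.2 b (fun hc => hne hc.symm)
        omega
  right_inv gh := by
    refine Prod.ext (Subtype.ext ?_) ?_
    · funext b
      simp [b.2]
    · funext b
      have h1 : ¬ ℓ b.1 = i := by have := b.2; omega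
      simp [h1, b.2]

lemma card_W (ℓ : Fin s → ℕ) (i : ℕ) :
    Fintype.card {w : Fin s → F // (∃ b, ℓ b = i ∧ w b ≠ 0) ∧ ∀ b, w b ≠ 0 → i ≤ ℓ b}
      = (Fintype.card F ^ Fintype.card {b : Fin s // ℓ b = i} - 1)
        * Fintype.card F ^ Fintype.card {b : Fin s // i < ℓ b} := by
  have h1 : Fintype.card {g : {b : Fin s // ℓ b = i} → F // g ≠ 0}
      = Fintype.card F ^ Fintype.card {b : Fin s // ℓ b = i} - 1 := by
    have e : Fintype.card {g : {b : Fin s // ℓ b = i} → F // ¬ (g = 0)}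
        = Fintype.card ({b : Fin s // ℓ b = i} → F)
          - Fintype.card {g : {b : Fin s // ℓ b = i} → F // g = 0} :=
      Fintype.card_subtype_compl _
    rw [Fintype.card_subtype_eq (0 : {b : Fin s // ℓ b = i} → F), Fintype.card_fun] at e
    exact e
  rw [Fintype.card_congr (splitEquiv ℓ i), Fintype.card_prod, h1, Fintype.card_fun]
end Count

lemma card_gt_subtype {s : ℕ} (ℓ : Fin s → ℕ) (i k : ℕ) (hk : ∀ b, ℓ b ≤ k) :
    Fintype.card {b : Fin s // i < ℓ b}
      = ∑ j ∈ Finset.Icc (i + 1) k, (Finset.univ.filter (fun b => ℓ b = j)).card := by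
  rw [Fintype.card_subtype]
  rw [Finset.card_eq_sum_card_fiberwise (f := ℓ) (t := Finset.Icc (i + 1) k)
    (fun b hb => by simp at hb ⊢; exact ⟨hb, hk b⟩)]
  apply Finset.sum_congr rfl
  intro j hj
  simp only [Finset.mem_Icc] at hj
  congr 1
  rw [Finset.filter_filter]
  apply Finset.filter_congr
  intro b _
  constructor
  · rintro ⟨_, h⟩; exact h
  · intro h; exact ⟨by omega, h⟩

/-- For `A = diag(J_a^{(ℓ₁)}, …, J_a^{(ℓ_s)})` over `𝔽_r` with species
`(λ₁, …, λ_k)` (`λ_j` = number of blocks of order `j`), the number of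
`1`-dimensional `A`-invariant subspaces of depth exactly `i` equals
`r^{λ_{i+1}+⋯+λ_k} ⬝ (r^{λ_i} - 1)/(r - 1)`. -/
theorem card_invariant_lines_of_depth
    (p e r : ℕ) [Fact p.Prime] (he : 1 ≤ e) (hr : r = p ^ e)
    (F : Type*) [Field F] [Fintype F] (hF : Fintype.card F = r)
    (a : F) (s k : ℕ) (ℓ : Fin s → ℕ) (hl : ∀ b, 1 ≤ ℓ b ∧ ℓ b ≤ k)
    (A : Matrix ((b : Fin s) × Fin (ℓ b)) ((b : Fin s) × Fin (ℓ b)) F)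
    (hA : A = Matrix.blockDiagonal' (fun b => stdJordanBlock F a (ℓ b)))
    (lam : ℕ → ℕ) (hlam : ∀ j, lam j = (Finset.univ.filter (fun b => ℓ b = j)).card)
    (i : ℕ) (hi1 : 1 ≤ i) (hik : i ≤ k) :
    Nat.card {U : Submodule F (((b : Fin s) × Fin (ℓ b)) → F) //
        Module.finrank F U = 1 ∧ (∀ v ∈ U, A.mulVec v ∈ U) ∧
        sInf {m : ℕ | ∃ b : Fin s, ℓ b = m ∧
          ∃ v ∈ U, ∃ x : Fin (ℓ b), v ⟨b, x⟩ ≠ 0} = i}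
      = r ^ (∑ j ∈ Finset.Icc (i + 1) k, lam j) * ((r ^ lam i - 1) / (r - 1)) := by
  subst hA
  have hl1 : ∀ b, 1 ≤ ℓ b := fun b => (hl b).1
  set P : Submodule F (((b : Fin s) × Fin (ℓ b)) → F) → Prop := fun U =>
    Module.finrank F U = 1 ∧
      (∀ v ∈ U, (Matrix.blockDiagonal' (fun b => stdJordanBlock F a (ℓ b))).mulVec v ∈ U) ∧
      sInf {m : ℕ | ∃ b : Fin s, ℓ b = m ∧
          ∃ v ∈ U, ∃ x : Fin (ℓ b), v ⟨b, x⟩ ≠ 0} = i with hP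
  set W : (Fin s → F) → Prop := fun w =>
    (∃ b, ℓ b = i ∧ w b ≠ 0) ∧ ∀ b, w b ≠ 0 → i ≤ ℓ b with hW
  -- W is preserved by nonzero scalars
  have hWsmul : ∀ (c : F), c ≠ 0 → ∀ w, W w → W (c • w) := by
    rintro c hc w ⟨⟨b, hb, hwb⟩, h2⟩
    refine ⟨⟨b, hb, by simp [hc, hwb]⟩, ?_⟩
    intro b' hb'
    apply h2
    intro h0
    simp [h0] at hb'
  -- the map Φ
  have hPspan : ∀ w : Fin s → F, W w → P (Submodule.span F {ewVec w}) := by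
    rintro w ⟨⟨b, hb, hwb⟩, h2⟩
    have hw0 : w ≠ 0 := Function.ne_iff.mpr ⟨b, hwb⟩
    obtain ⟨hfr, hinv⟩ := (span_classify (a := a) hl1 (Submodule.span F {ewVec w})).mpr
      ⟨w, hw0, rfl⟩
    refine ⟨hfr, hinv, ?_⟩
    rw [depth_set_eq hl1]
    exact (sInf_depth_iff hi1).mpr ⟨⟨b, hb, hwb⟩, h2⟩
  let Φ : {w : Fin s → F // W w} → {U : Submodule F (((b : Fin s) × Fin (ℓ b)) → F) // P U} :=
    fun w => ⟨Submodule.span F {ewVec w.1}, hPspan w.1 w.2⟩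
  have hsurj : Function.Surjective Φ := by
    rintro ⟨U, h1, h2, h3⟩
    obtain ⟨w, hw0, hU⟩ := (span_classify (a := a) hl1 U).mp ⟨h1, h2⟩
    have h3' : sInf {m : ℕ | ∃ b : Fin s, ℓ b = m ∧ w b ≠ 0} = i := by
      rw [← depth_set_eq hl1, ← hU]
      exact h3
    have hWw : W w := (sInf_depth_iff hi1).mp h3'
    exact ⟨⟨w, hWw⟩, Subtype.ext hU.symm⟩
  haveI : Finite {U : Submodule F (((b : Fin s) × Fin (ℓ b)) → F) // P U} :=
    Finite.of_surjective Φ hsurj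
  haveI : Fintype {U : Submodule F (((b : Fin s) × Fin (ℓ b)) → F) // P U} :=
    Fintype.ofFinite _
  -- fibers of Φ have cardinality r - 1
  have hfiber : ∀ U : {U : Submodule F (((b : Fin s) × Fin (ℓ b)) → F) // P U},
      Fintype.card {w : {w : Fin s → F // W w} // Φ w = U} = r - 1 := by
    intro U
    obtain ⟨w₀, hw₀⟩ := hsurj U
    have hw₀ne : ∃ b, w₀.1 b ≠ 0 := by
      obtain ⟨⟨b, _, hwb⟩, _⟩ := w₀.2
      exact ⟨b, hwb⟩
    have hbij : Function.Bijective (fun c : {c : F // c ≠ 0} =>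
        (⟨⟨c.1 • w₀.1, hWsmul c.1 c.2 w₀.1 w₀.2⟩, by
          rw [← hw₀]
          apply Subtype.ext
          show Submodule.span F {ewVec (c.1 • w₀.1)} = Submodule.span F {ewVec w₀.1}
          rw [ewVec_smul]
          exact Submodule.span_singleton_smul_eq (isUnit_iff_ne_zero.mpr c.2) _⟩ :
          {w : {w : Fin s → F // W w} // Φ w = U})) := by
      constructor
      · rintro ⟨c, hc⟩ ⟨c', hc'⟩ h
        have h2 : c • w₀.1 = c' • w₀.1 := by
          have := congrArg (fun x => x.1.1) h
          exact this
        obtain ⟨b, hb⟩ := hw₀ne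
        have := congrFun h2 b
        simp only [Pi.smul_apply, smul_eq_mul] at this
        exact Subtype.ext (mul_right_cancel₀ hb this)
      · rintro ⟨⟨w, hWw⟩, hΦw⟩
        have hspan : Submodule.span F {ewVec (ℓ := ℓ) w} = Submodule.span F {ewVec w₀.1} := by
          have e1 : (Φ ⟨w, hWw⟩).1 = U.1 := congrArg Subtype.val hΦw
          have e2 : (Φ w₀).1 = U.1 := congrArg Subtype.val hw₀
          rw [← e2] at e1
          exact e1
        have hmem : ewVec (ℓ := ℓ) w ∈ Submodule.span F {ewVec (ℓ := ℓ) w₀.1} := by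
          rw [← hspan]
          exact Submodule.mem_span_singleton_self _
        rw [Submodule.mem_span_singleton] at hmem
        obtain ⟨c, hc⟩ := hmem
        have hwc : w = c • w₀.1 := by
          apply ewVec_inj hl1
          rw [ewVec_smul, hc]
        have hc0 : c ≠ 0 := by
          rintro rfl
          obtain ⟨⟨b, _, hwb⟩, _⟩ := hWw
          rw [hwc] at hwb
          simp at hwb
        refine ⟨⟨c, hc0⟩, ?_⟩
        apply Subtype.ext
        apply Subtype.ext
        exact hwc.symm
    have := Fintype.card_congr (Equiv.ofBijective _ hbij)
    rw [← this]
    have : Fintype.card {c : F // ¬ c = 0} = Fintype.card F - Fintype.card {c : F // c = 0} :=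
      Fintype.card_subtype_compl _
    rw [Fintype.card_subtype_eq (0 : F), hF] at this
    exact this
  -- total count
  have hkey : Fintype.card {w : Fin s → F // W w}
      = Fintype.card {U : Submodule F (((b : Fin s) × Fin (ℓ b)) → F) // P U} * (r - 1) := by
    have e1 := Fintype.card_congr (Equiv.sigmaFiberEquiv Φ)
    rw [Fintype.card_sigma] at e1
    rw [← e1]
    rw [Finset.sum_congr rfl (fun U _ => hfiber U), Finset.sum_const, Finset.card_univ,
      smul_eq_mul]
  -- compute card of W
  have hcardW : Fintype.card {w : Fin s → F // W w}
      = (r ^ lam i - 1) * r ^ (∑ j ∈ Finset.Icc (i + 1) k, lam j) := by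
    rw [Fintype.card_congr (Equiv.subtypeEquivRight (fun w => by rw [hW]) :
      {w : Fin s → F // W w} ≃
        {w : Fin s → F // (∃ b, ℓ b = i ∧ w b ≠ 0) ∧ ∀ b, w b ≠ 0 → i ≤ ℓ b})]
    rw [card_W ℓ i, hF]
    have c1 : Fintype.card {b : Fin s // ℓ b = i} = lam i := by
      rw [Fintype.card_subtype, hlam i]
    have c2 : Fintype.card {b : Fin s // i < ℓ b} = ∑ j ∈ Finset.Icc (i + 1) k, lam j := by
      rw [card_gt_subtype ℓ i k (fun b => (hl b).2)]
      exact Finset.sum_congr rfl (fun j _ => (hlam j).symm)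
    rw [c1, c2]
  -- final arithmetic
  have hr2 : 2 ≤ r := by
    have hp : 2 ≤ p := (Fact.out : p.Prime).two_le
    have : p ≤ p ^ e := Nat.le_self_pow (by omega) p
    omega
  obtain ⟨t, ht⟩ : (r - 1) ∣ (r ^ lam i - 1) := by
    simpa using Nat.sub_dvd_pow_sub_pow r 1 (lam i)
  have h1 : 0 < r - 1 := by omega
  rw [Nat.card_eq_fintype_card]
  have hdiv : (r ^ lam i - 1) / (r - 1) = t := by
    rw [ht]; exact Nat.mul_div_cancel_left t h1
  rw [hdiv]
  apply Nat.eq_of_mul_eq_mul_right h1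
  rw [← hkey, hcardW, ht]
  ring
end
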